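/- Let D be the triangular fuzzy variable (r1,r2,r4) with 0 < r1 < r2 < r4 and let λ ∈ [0,1]. Then E_λ(1/D) = ∫_0^∞ m_λ(D ≤ 1/r) dr = (λ/(r2 − r1))·ln(r2/r1) + ((1 − λ)/(r4 − r2))·ln(r4/r2). -/

import Mathlib

open MeasureTheory Set

/-- Possibility measure of an event `A` built from membership function `μ`
(with the convention `sSup ∅ = 0`, which holds for `Real.sSup`). -/
noncomputable def Pos (μ : ℝ → ℝ) (A : Set ℝ) : ℝ := sSup (μ '' A)

/-- Necessity measure associated with `μ`. -/
noncomputable def Nec (μ : ℝ → ℝ) (A : Set ℝ) : ℝ := 1 - Pos μ Aᶜ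

/-- The parametric measure `m_λ(A) = λ·Pos(A) + (1−λ)·Nec(A)`. -/
noncomputable def mMeas (l : ℝ) (μ : ℝ → ℝ) (A : Set ℝ) : ℝ :=
  l * Pos μ A + (1 - l) * Nec μ A

/-- The `m_λ`-expected value of the fuzzy variable with membership function `μ`:
`E_λ(ξ) = ∫_{−∞}^0 (m_λ([r,∞)) − 1) dr + ∫_0^∞ m_λ([r,∞)) dr`. -/
noncomputable def Eexp (l : ℝ) (μ : ℝ → ℝ) : ℝ :=
  (∫ r in Set.Iic (0:ℝ), (mMeas l μ (Set.Ici r) - 1)) +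
  (∫ r in Set.Ioi (0:ℝ), mMeas l μ (Set.Ici r))

/-- Membership function of the trapezoidal fuzzy variable `(r1,r2,r3,r4)`. -/
noncomputable def trapMF (r1 r2 r3 r4 : ℝ) : ℝ → ℝ := fun x =>
  if r1 ≤ x ∧ x ≤ r2 then (x - r1) / (r2 - r1)
  else if r2 ≤ x ∧ x ≤ r3 then 1
  else if r3 ≤ x ∧ x ≤ r4 then (r4 - x) / (r4 - r3)
  else 0

/-- Membership function of the triangular fuzzy variable `(r1,r2,r4)`. -/
noncomputable def triMF (r1 r2 r4 : ℝ) : ℝ → ℝ := fun x =>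
  if r1 ≤ x ∧ x ≤ r2 then (x - r1) / (r2 - r1)
  else if r2 ≤ x ∧ x ≤ r4 then (r4 - x) / (r4 - r2)
  else 0

/-- Membership function of the trapezoidal fuzzy variable `(a−α, a, b, b+β)`. -/
noncomputable def trapMF2 (a b α β : ℝ) : ℝ → ℝ := fun x =>
  if a - α ≤ x ∧ x ≤ a then 1 - (a - x) / α
  else if a ≤ x ∧ x ≤ b then 1
  else if b ≤ x ∧ x ≤ b + β then 1 - (x - b) / β
  else 0

/-- Membership function of the triangular fuzzy variable `(a−α, a, a+β)`. -/
noncomputable def triMF2 (a α β : ℝ) : ℝ → ℝ := fun x =>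
  if a - α ≤ x ∧ x ≤ a then 1 - (a - x) / α
  else if a ≤ x ∧ x ≤ a + β then 1 - (x - a) / β
  else 0

/-! The triangular membership function is `min (ramp r1 r2) (1 - ramp r2 r4)`, the minimum of a
rising and a falling linear ramp. As it increases up to `r2` and decreases afterwards,
`sup_{x ≤ t} μ = ramp r1 r2 t` and, by continuity, `sup_{x > t} μ = 1 - ramp r2 r4 t`; hence
`m_λ(D ≤ t) = λ · ramp r1 r2 t + (1 - λ) · ramp r2 r4 t`. For `0 < a < b`,
`∫_0^∞ ramp a b (1/r) dr = 1/b + ∫_{1/b}^{1/a} (1/r - a)/(b - a) dr = log (b/a) / (b - a)`,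
and the theorem follows by linearity. -/

noncomputable def ramp (a b t : ℝ) : ℝ := max 0 (min 1 ((t - a) / (b - a)))

section Ramp

variable {a b t : ℝ}

lemma ramp_nonneg : 0 ≤ ramp a b t := le_max_left _ _

lemma ramp_le_one : ramp a b t ≤ 1 := max_le zero_le_one (min_le_left _ _)

lemma ramp_of_le_left (hab : a ≤ b) (ht : t ≤ a) : ramp a b t = 0 :=
  max_eq_left <| min_le_of_right_le <|
    div_nonpos_of_nonpos_of_nonneg (sub_nonpos.2 ht) (sub_nonneg.2 hab)

lemma ramp_of_right_le (hab : a < b) (ht : b ≤ t) : ramp a b t = 1 := by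
  have : 1 ≤ (t - a) / (b - a) := by rw [le_div_iff₀ (sub_pos.2 hab)]; linarith
  rw [ramp, min_eq_left this, max_eq_right zero_le_one]

lemma ramp_of_mem_Icc (hab : a < b) (ht : t ∈ Icc a b) : ramp a b t = (t - a) / (b - a) := by
  have h0 : 0 ≤ (t - a) / (b - a) := div_nonneg (sub_nonneg.2 ht.1) (sub_pos.2 hab).le
  have h1 : (t - a) / (b - a) ≤ 1 := (div_le_one (sub_pos.2 hab)).2 (by linarith [ht.2])
  rw [ramp, min_eq_right h1, max_eq_right h0]

lemma ramp_mono (hab : a ≤ b) : Monotone (ramp a b) := fun x y hxy => by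
  unfold ramp
  gcongr

@[fun_prop]
lemma continuous_ramp : Continuous (ramp a b) := by
  unfold ramp
  fun_prop

lemma ramp_min_right (hab : a < b) : ramp a b (min t b) = ramp a b t := by
  rcases le_total t b with h | h
  · rw [min_eq_left h]
  · rw [min_eq_right h, ramp_of_right_le hab le_rfl, ramp_of_right_le hab h]

lemma ramp_max_left (hab : a ≤ b) : ramp a b (max t a) = ramp a b t := by
  rcases le_total t a with h | h
  · rw [max_eq_right h, ramp_of_le_left hab le_rfl, ramp_of_le_left hab h]
  · rw [max_eq_left h]

end Ramp

lemma triMF_eq_min_ramp {r1 r2 r4 : ℝ} (h12 : r1 < r2) (h24 : r2 < r4) (x : ℝ) :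
    triMF r1 r2 r4 x = min (ramp r1 r2 x) (1 - ramp r2 r4 x) := by
  unfold triMF
  split_ifs with h1 h2
  · rw [ramp_of_le_left h24.le h1.2, sub_zero, min_eq_left ramp_le_one, ramp_of_mem_Icc h12 h1]
  · rw [ramp_of_right_le h12 h2.1, min_eq_right (sub_le_self _ ramp_nonneg),
      ramp_of_mem_Icc h24 h2]
    field_simp [(sub_pos.2 h24).ne']
    ring
  · push Not at h1 h2
    rcases lt_or_ge x r1 with h | h
    · rw [ramp_of_le_left h12.le h.le, min_eq_left (sub_nonneg.2 ramp_le_one)]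
    · have h4x : r4 < x := h2 (h1 h).le
      rw [ramp_of_right_le h24 h4x.le, sub_self, min_eq_right ramp_nonneg]

lemma isLUB_image_Ioi_of_isGreatest_image_Ici {α β : Type*} [TopologicalSpace α] [LinearOrder α]
    [OrderTopology α] [DenselyOrdered α] [NoMaxOrder α] [TopologicalSpace β] [Preorder β]
    [ClosedIicTopology β] {f : α → β} (hf : Continuous f) {t : α} {y : β}
    (h : IsGreatest (f '' Ici t) y) : IsLUB (f '' Ioi t) y :=
  (isLUB_iff_of_subset_of_subset_closure (image_mono Ioi_subset_Ici_self)
    (closure_Ioi t ▸ image_closure_subset_closure_image hf)).2 h.isLUB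

section MinRamp

variable {a b c d : ℝ}

lemma isGreatest_min_ramp_image_Iic (hab : a < b) (hbc : b ≤ c) (hcd : c ≤ d) (t : ℝ) :
    IsGreatest ((fun x => min (ramp a b x) (1 - ramp c d x)) '' Iic t) (ramp a b t) := by
  refine ⟨⟨min t b, min_le_left t b, ?_⟩, ?_⟩
  · dsimp only
    rw [ramp_min_right hab, ramp_of_le_left hcd ((min_le_right t b).trans hbc), sub_zero,
      min_eq_left ramp_le_one]
  · rintro _ ⟨x, hx, rfl⟩
    exact (min_le_left _ _).trans (ramp_mono hab.le hx)

lemma isGreatest_min_ramp_image_Ici (hab : a < b) (hbc : b ≤ c) (hcd : c ≤ d) (t : ℝ) :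
    IsGreatest ((fun x => min (ramp a b x) (1 - ramp c d x)) '' Ici t) (1 - ramp c d t) := by
  refine ⟨⟨max t c, le_max_left t c, ?_⟩, ?_⟩
  · dsimp only
    rw [ramp_max_left hcd, ramp_of_right_le hab (hbc.trans (le_max_right t c)),
      min_eq_right (sub_le_self _ ramp_nonneg)]
  · rintro _ ⟨x, hx, rfl⟩
    exact (min_le_right _ _).trans (sub_le_sub_left (ramp_mono hcd hx) 1)

lemma mMeas_min_ramp_Iic (l : ℝ) (hab : a < b) (hbc : b ≤ c) (hcd : c ≤ d) (t : ℝ) :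
    mMeas l (fun x => min (ramp a b x) (1 - ramp c d x)) (Iic t) =
      l * ramp a b t + (1 - l) * ramp c d t := by
  have hcont : Continuous fun x => min (ramp a b x) (1 - ramp c d x) := by fun_prop
  rw [mMeas, Nec, Pos, Pos, compl_Iic,
    (isGreatest_min_ramp_image_Iic hab hbc hcd t).csSup_eq,
    (isLUB_image_Ioi_of_isGreatest_image_Ici hcont
      (isGreatest_min_ramp_image_Ici hab hbc hcd t)).csSup_eq (nonempty_Ioi.image _)]
  ring

end MinRamp

section RampIntegral

variable {a b : ℝ}

lemma ramp_one_div_of_lt (ha : 0 < a) (hab : a ≤ b) {r : ℝ} (hr : a⁻¹ < r) :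
    ramp a b (1 / r) = 0 := by
  refine ramp_of_le_left hab ?_
  rw [one_div]
  exact (inv_lt_of_inv_lt₀ ha hr).le

lemma integrableOn_ramp_one_div_Ioc (a b s : ℝ) :
    IntegrableOn (fun r => ramp a b (1 / r)) (Ioc 0 s) := by
  refine IntegrableOn.of_bound measure_Ioc_lt_top
    (continuous_ramp.measurable.comp (by fun_prop)).aestronglyMeasurable 1
    (Filter.Eventually.of_forall fun r => ?_)
  rw [Real.norm_of_nonneg ramp_nonneg]
  exact ramp_le_one

lemma integrableOn_ramp_one_div (ha : 0 < a) (hab : a ≤ b) :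
    IntegrableOn (fun r => ramp a b (1 / r)) (Ioi 0) :=
  (integrableOn_ramp_one_div_Ioc a b a⁻¹).of_forall_sdiff_eq_zero measurableSet_Ioi
    fun _ hr => ramp_one_div_of_lt ha hab (not_le.1 fun h => hr.2 ⟨hr.1, h⟩)

open intervalIntegral in
lemma integral_ramp_one_div (ha : 0 < a) (hab : a < b) :
    ∫ r in Ioi 0, ramp a b (1 / r) = Real.log (b / a) / (b - a) := by
  have hb : 0 < b := ha.trans hab
  have hba : b⁻¹ ≤ a⁻¹ := inv_anti₀ ha hab.le
  have h0 : (0 : ℝ) ∉ uIcc b⁻¹ a⁻¹ := fun h =>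
    (inv_pos.2 hb).not_ge (uIcc_of_le hba ▸ h).1
  have hint (s t : ℝ) (hs : 0 ≤ s) (hst : s ≤ t) :
      IntervalIntegrable (fun r => ramp a b (1 / r)) volume s t :=
    (intervalIntegrable_iff_integrableOn_Ioc_of_le hst).2
      ((integrableOn_ramp_one_div_Ioc a b t).mono_set (Ioc_subset_Ioc_left hs))
  have hflat : ∀ r ∈ Ioc 0 b⁻¹, ramp a b (1 / r) = 1 := fun r hr =>
    ramp_of_right_le hab (by rw [one_div]; exact (le_inv_comm₀ hr.1 hb).1 hr.2)
  have hslope :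
      EqOn (fun r => ramp a b (1 / r)) (fun r => (r⁻¹ - a) / (b - a)) (uIcc b⁻¹ a⁻¹) := by
    intro r hr
    rw [uIcc_of_le hba] at hr
    have hr0 : 0 < r := (inv_pos.2 hb).trans_le hr.1
    dsimp only
    rw [one_div,
      ramp_of_mem_Icc hab ⟨(le_inv_comm₀ hr0 ha).1 hr.2, (inv_le_comm₀ hb hr0).1 hr.1⟩]
  calc ∫ r in Ioi 0, ramp a b (1 / r)
      = ∫ r in Ioc 0 a⁻¹, ramp a b (1 / r) :=
        setIntegral_eq_of_subset_of_forall_sdiff_eq_zero measurableSet_Ioi Ioc_subset_Ioi_self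
          fun _ hr => ramp_one_div_of_lt ha hab.le (not_le.1 fun h => hr.2 ⟨hr.1, h⟩)
    _ = (∫ r in (0)..b⁻¹, ramp a b (1 / r)) + ∫ r in b⁻¹..a⁻¹, ramp a b (1 / r) := by
        rw [integral_add_adjacent_intervals (hint _ _ le_rfl (inv_pos.2 hb).le)
          (hint _ _ (inv_pos.2 hb).le hba), integral_of_le (inv_pos.2 ha).le]
    _ = (∫ _ in (0)..b⁻¹, (1 : ℝ)) + ∫ r in b⁻¹..a⁻¹, (r⁻¹ - a) / (b - a) := by
        rw [integral_congr hslope, integral_congr_ae (Filter.Eventually.of_forall fun r hr =>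
          hflat r (uIoc_of_le (inv_pos.2 hb).le ▸ hr))]
    _ = Real.log (b / a) / (b - a) := by
        rw [intervalIntegral.integral_div, intervalIntegral.integral_sub
            (intervalIntegrable_inv_iff.2 (Or.inr h0)) intervalIntegrable_const,
          integral_inv_of_pos (inv_pos.2 hb) (inv_pos.2 ha), intervalIntegral.integral_const,
          intervalIntegral.integral_const, smul_eq_mul, smul_eq_mul, inv_div_inv]
        field_simp [ha.ne', hb.ne', (sub_pos.2 hab).ne']
        ring

end RampIntegral

theorem stmt_8_general (r1 r2 r4 l : ℝ)
    (h0 : 0 < r1) (h12 : r1 < r2) (h24 : r2 < r4) :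
    (∫ r in Set.Ioi (0:ℝ), mMeas l (triMF r1 r2 r4) (Set.Iic (1 / r))) =
      l / (r2 - r1) * Real.log (r2 / r1) + (1 - l) / (r4 - r2) * Real.log (r4 / r2) := by
  have h02 : 0 < r2 := h0.trans h12
  simp_rw [funext (triMF_eq_min_ramp h12 h24), mMeas_min_ramp_Iic l h12 le_rfl h24.le]
  rw [integral_add ((integrableOn_ramp_one_div h0 h12.le).const_mul l)
      ((integrableOn_ramp_one_div h02 h24.le).const_mul (1 - l)),
    integral_const_mul, integral_const_mul, integral_ramp_one_div h0 h12,
    integral_ramp_one_div h02 h24]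
  ring

theorem stmt_8 (r1 r2 r4 l : ℝ)
    (h0 : 0 < r1) (h12 : r1 < r2) (h24 : r2 < r4)
    (hl : l ∈ Set.Icc (0:ℝ) 1) :
    (∫ r in Set.Ioi (0:ℝ), mMeas l (triMF r1 r2 r4) (Set.Iic (1 / r))) =
      l / (r2 - r1) * Real.log (r2 / r1) + (1 - l) / (r4 - r2) * Real.log (r4 / r2) :=
  stmt_8_general r1 r2 r4 l h0 h12 h24
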